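/- arXiv:1401.5767 — 9 statements merged into one kernel-verified Lean document; each statement's English description precedes it below -/
import Mathlib

section
/- Let b ≥ 1 be an integer and let p0, p1 be real numbers with 0 < p1 ≤ p0. Then p0·log(b·p0/(p0+(b−1)·p1)) + (b−1)·p1·log(b·p1/(p0+(b−1)·p1)) ≥ p0·log b − p0·log(1 + b·p1/p0) − p0. -/
/-!
Write `S = p₀ + (b - 1) p₁`. Since `S ≤ p₀ + b p₁`, the first term dominates
`p₀ log (b p₀ / (p₀ + b p₁))`, which is the right-hand side plus `p₀`. The second term is bounded
below through `log x ≥ 1 - 1/x`, giving `(b - 1)(p₁ - p₀) / b ≥ -p₀`.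
-/

open Real

theorem Real.mul_one_sub_div_le_mul_log_div {c x y : ℝ} (hc : 0 ≤ c) (hx : 0 < x) (hy : 0 < y) :
    c * (1 - y / x) ≤ c * log (x / y) := by
  have h := one_sub_inv_le_log_of_pos (div_pos hx hy)
  rw [inv_div] at h
  exact mul_le_mul_of_nonneg_left h hc

theorem Real.log_sub_log_one_add_div {b p q : ℝ} (hb : 0 < b) (hp : 0 < p) (hq : 0 ≤ q) :
    log b - log (1 + q / p) = log (b * p / (p + q)) := by
  rw [one_add_div hp.ne', ← log_div hb.ne' (by positivity), div_div_eq_mul_div]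

theorem neg_le_mul_log_div_add_mul {B p₀ p₁ : ℝ} (hB : 1 ≤ B) (hp₀ : 0 < p₀) (hp₁ : 0 < p₁) :
    -p₀ ≤ (B - 1) * p₁ * log (B * p₁ / (p₀ + (B - 1) * p₁)) := by
  have hB₀ : 0 < B := by linarith
  have hS : 0 < p₀ + (B - 1) * p₁ := by nlinarith
  have hlinear :
      (B - 1) * p₁ * (1 - (p₀ + (B - 1) * p₁) / (B * p₁)) = (B - 1) * (p₁ - p₀) / B := by
    field_simp
    ring
  calc -p₀ ≤ (B - 1) * p₁ * (1 - (p₀ + (B - 1) * p₁) / (B * p₁)) := by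
        rw [hlinear, le_div_iff₀ hB₀]
        nlinarith
    _ ≤ _ := mul_one_sub_div_le_mul_log_div (by nlinarith) (by positivity) hS

/-- Chain of inequalities lower-bounding the simple-PPM super-channel mutual information. -/
theorem stmt_0 (b : ℕ) (hb : 1 ≤ b) (p0 p1 : ℝ) (hp1 : 0 < p1) (hle : p1 ≤ p0) :
    p0 * Real.log ((b : ℝ) * p0 / (p0 + ((b : ℝ) - 1) * p1))
      + ((b : ℝ) - 1) * p1 * Real.log ((b : ℝ) * p1 / (p0 + ((b : ℝ) - 1) * p1))
    ≥ p0 * Real.log (b : ℝ) - p0 * Real.log (1 + (b : ℝ) * p1 / p0) - p0 := by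
  have hp0 : 0 < p0 := hp1.trans_le hle
  have hB : (1 : ℝ) ≤ b := by exact_mod_cast hb
  have hB₀ : (0 : ℝ) < b := by linarith
  have hfirst : p0 * log (b * p0 / (p0 + b * p1)) ≤ p0 * log (b * p0 / (p0 + (b - 1) * p1)) := by
    gcongr
    linarith
  rw [ge_iff_le, ← mul_sub, log_sub_log_one_add_div hB₀ hp0 (by positivity)]
  linarith [neg_le_mul_log_div_add_mul hB hp0 hp1]
end

section
/- Let c ≥ 0 and E ∈ (0,1) satisfy E·log(1/E) < 1 and E < e^{−c}. Set b := ⌊1/(E·log(1/E))⌋, η := b·E, p0 := e^{−(b−1)cE} − e^{−η−b·cE}, and p1 := e^{−η−(b−1)cE} − e^{−η−b·cE}. Then (1/η)·[ p0·log(b·p0/(p0+(b−1)·p1)) + (b−1)·p1·log(b·p1/(p0+(b−1)·p1)) ] ≥ (1−η/2)·log b − c·η·log b − (1 + cE/η)·log(1+c) + (1 + cE/η)·( log(1−c·η) + log(1−η/2) ) − 1 − cE/η. -/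
/-!
Writing `A = exp (-(b - 1) c E)` and `t = η + cE`, one has `p0 = A (1 - e^{-t})` and
`p1 = A e^{-η} (1 - e^{-cE})`, whence `(b - 1) p1 ≤ c p0` because `(b - 1)(1 - e^{-cE}) ≤ cη`
and `η e^{-η} ≤ 1 - e^{-η}`. So the erasure-free probability is at most `(1 + c) p0`, the
correct-slot term is at least `p0 (log b - log (1 + c))`, and by `log x ≥ 1 - 1/x` the
wrong-slot term is at least `-p0 ≥ -t`. What remains is a lower bound on `p0 log b`, which
follows from `p0 ≥ e^{-cη} (t - t²/2)`, `log (1 - cη) ≤ -cη` and `cE log b ≤ 2cη`.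
-/

open Real

lemma exp_neg_le_one_sub_add_sq_div_two {t : ℝ} (ht : 0 ≤ t) :
    exp (-t) ≤ 1 - t + t ^ 2 / 2 := by
  have hQ : 0 < 1 + t + t ^ 2 / 2 := by positivity
  refine le_of_mul_le_mul_right ?_ hQ
  calc exp (-t) * (1 + t + t ^ 2 / 2) ≤ exp (-t) * exp t :=
        mul_le_mul_of_nonneg_left (quadratic_le_exp_of_nonneg ht) (exp_pos _).le
    _ = 1 := by rw [← exp_add, neg_add_cancel, exp_zero]
    _ ≤ (1 - t + t ^ 2 / 2) * (1 + t + t ^ 2 / 2) := by nlinarith [sq_nonneg (t ^ 2)]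

lemma mul_exp_neg_le_one_sub_exp_neg (t : ℝ) : t * exp (-t) ≤ 1 - exp (-t) := by
  have h := mul_le_mul_of_nonneg_right (add_one_le_exp t) (exp_pos (-t)).le
  rw [← exp_add, add_neg_cancel, exp_zero] at h
  linarith

lemma sub_le_mul_log_div {q S : ℝ} (hq : 0 ≤ q) (hqS : q ≤ S) :
    q - S ≤ q * log (q / S) := by
  rcases hq.eq_or_lt with rfl | hq
  · simpa using hqS
  have hS : 0 < S := hq.trans_le hqS
  have h := one_sub_inv_le_log_of_pos (div_pos hq hS)
  rw [inv_div] at h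
  calc q - S = q * (1 - S / q) := by field_simp
    _ ≤ q * log (q / S) := mul_le_mul_of_nonneg_left h hq.le

/-- Mutual information of `b`-ary pulse-position modulation with uniform input, when the
receiver decodes the transmitted slot with probability `p0`, each given other slot with
probability `p1`, and declares an erasure otherwise. -/
noncomputable def ppmInformation (b p0 p1 : ℝ) : ℝ :=
  p0 * log (b * p0 / (p0 + (b - 1) * p1)) + (b - 1) * p1 * log (b * p1 / (p0 + (b - 1) * p1))

lemma ppmInformation_ge {b c p0 p1 : ℝ} (hb : 1 ≤ b) (hp0 : 0 < p0) (hp1 : 0 ≤ p1)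
    (hp1c : (b - 1) * p1 ≤ c * p0) :
    p0 * (log b - log (1 + c) - 1) ≤ ppmInformation b p0 p1 := by
  set q := (b - 1) * p1
  set S := p0 + q
  have hq : 0 ≤ q := mul_nonneg (by linarith) hp1
  have hS : 0 < S := by positivity
  have hc : 0 < 1 + c := by nlinarith
  have hmain : log b - log (1 + c) ≤ log (b * p0 / S) := by
    rw [← log_div (by positivity) hc.ne']
    refine log_le_log (by positivity) ?_
    rw [div_le_div_iff₀ hc hS]
    nlinarith
  have hrest : q * log (q / S) ≤ q * log (b * p1 / S) := by
    rcases hq.eq_or_lt with hq0 | hq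
    · simp [← hq0]
    refine mul_le_mul_of_nonneg_left (log_le_log (by positivity) ?_) hq.le
    exact div_le_div_of_nonneg_right (by nlinarith) hS.le
  have hlow := sub_le_mul_log_div hq (le_add_of_nonneg_left hp0.le : q ≤ S)
  unfold ppmInformation
  nlinarith

noncomputable def ppmP0 (b c E : ℝ) : ℝ :=
  exp (-((b - 1) * c * E)) - exp (-(b * E) - b * c * E)

noncomputable def ppmP1 (b c E : ℝ) : ℝ :=
  exp (-(b * E) - (b - 1) * c * E) - exp (-(b * E) - b * c * E)

section
variable {b c E : ℝ}

lemma ppmP0_eq (b c E : ℝ) :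
    ppmP0 b c E = exp (-((b - 1) * c * E)) * (1 - exp (-(b * E + c * E))) := by
  rw [ppmP0, mul_one_sub, ← exp_add]
  ring_nf

lemma ppmP1_eq (b c E : ℝ) :
    ppmP1 b c E = exp (-((b - 1) * c * E)) * exp (-(b * E)) * (1 - exp (-(c * E))) := by
  rw [ppmP1, mul_one_sub, ← exp_add, ← exp_add]
  ring_nf

lemma ppmP0_pos (hb : 0 < b) (hc : 0 ≤ c) (hE : 0 < E) : 0 < ppmP0 b c E := by
  rw [ppmP0_eq]
  have : exp (-(b * E + c * E)) < 1 := exp_lt_one_iff.2 (by nlinarith)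
  exact mul_pos (exp_pos _) (by linarith)

lemma ppmP1_nonneg (hc : 0 ≤ c) (hE : 0 ≤ E) : 0 ≤ ppmP1 b c E := by
  rw [ppmP1_eq]
  have : exp (-(c * E)) ≤ 1 := exp_le_one_iff.2 (by nlinarith)
  exact mul_nonneg (by positivity) (by linarith)

lemma ppmP0_le (hb : 1 ≤ b) (hc : 0 ≤ c) (hE : 0 ≤ E) : ppmP0 b c E ≤ b * E + c * E := by
  rw [ppmP0_eq]
  have hA : exp (-((b - 1) * c * E)) ≤ 1 :=
    exp_le_one_iff.2 (neg_nonpos.2 (by have := sub_nonneg.2 hb; positivity))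
  have h0 : exp (-(b * E + c * E)) ≤ 1 := exp_le_one_iff.2 (by nlinarith)
  have h1 := one_sub_le_exp_neg (b * E + c * E)
  nlinarith

lemma exp_neg_mul_le_ppmP0 (hb : 0 ≤ b) (hc : 0 ≤ c) (hE : 0 ≤ E) :
    exp (-(b * (c * E))) * (1 - exp (-(b * E + c * E))) ≤ ppmP0 b c E := by
  rw [ppmP0_eq]
  have h0 : exp (-(b * E + c * E)) ≤ 1 := exp_le_one_iff.2 (by nlinarith)
  refine mul_le_mul_of_nonneg_right (exp_le_exp.2 ?_) (by linarith)
  nlinarith [mul_nonneg hc hE]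

lemma sub_one_mul_ppmP1_le (hb : 1 ≤ b) (hc : 0 ≤ c) (hE : 0 ≤ E) :
    (b - 1) * ppmP1 b c E ≤ c * ppmP0 b c E := by
  rw [ppmP1_eq, ppmP0_eq]
  set A := exp (-((b - 1) * c * E))
  have hX : 1 - exp (-(c * E)) ≤ c * E := by linarith [one_sub_le_exp_neg (c * E)]
  have hbE := mul_exp_neg_le_one_sub_exp_neg (b * E)
  have hmono : exp (-(b * E + c * E)) ≤ exp (-(b * E)) :=
    exp_le_exp.2 (by nlinarith [mul_nonneg hc hE])
  calc (b - 1) * (A * exp (-(b * E)) * (1 - exp (-(c * E))))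
      = A * exp (-(b * E)) * ((b - 1) * (1 - exp (-(c * E)))) := by ring
    _ ≤ A * exp (-(b * E)) * (c * (b * E)) := by
        refine mul_le_mul_of_nonneg_left ?_ (by positivity)
        have := mul_le_mul_of_nonneg_left hX (sub_nonneg.2 hb)
        nlinarith [mul_nonneg hc hE]
    _ = c * (A * (b * E * exp (-(b * E)))) := by ring
    _ ≤ c * (A * (1 - exp (-(b * E + c * E)))) := by
        gcongr
        linarith
end

section
variable {b η X s : ℝ}

lemma ppm_log_bound_nonpos (hb : 1 ≤ b) (hηb : η ≤ b) (hη : 0 < η) (hX : 0 ≤ X)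
    (hX1 : X ≤ 1) (hs : 0 ≤ s) (hs1 : s < 1) (h : 1 - η / 2 - s ≤ 0) :
    η * (1 - η / 2 - s) * log b + (η + X) * (log (1 - s) + log (1 - η / 2)) ≤ 0 := by
  have hL : 0 ≤ log b := log_nonneg hb
  have hs' : log (1 - s) ≤ 0 := log_nonpos (by linarith) (by linarith)
  have hfirst : η * (1 - η / 2 - s) * log b ≤ 0 :=
    mul_nonpos_of_nonpos_of_nonneg (mul_nonpos_of_nonneg_of_nonpos hη.le h) hL
  rcases le_or_gt η 4 with h4 | h4
  · have hη' : log (1 - η / 2) ≤ 0 := by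
      rw [← log_abs]
      exact log_nonpos (abs_nonneg _) (abs_le.2 ⟨by linarith, by linarith⟩)
    nlinarith
  -- `log (1 - η / 2)` is now the junk value `log (η / 2 - 1)`, outweighed by `log b ≥ 1`.
  have hL1 : 1 ≤ log b := by
    rw [le_log_iff_exp_le (by linarith)]
    linarith [exp_one_lt_d9]
  have hη' : log (1 - η / 2) ≤ η / 2 - 2 := by
    rw [← log_abs, abs_of_neg (by linarith)]
    linarith [log_le_sub_one_of_pos (show 0 < -(1 - η / 2) by linarith)]
  have h1 : η * (1 - η / 2 - s) * log b ≤ η * (1 - η / 2) := by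
    nlinarith [mul_le_mul_of_nonneg_left (sub_nonneg.2 hL1) (neg_nonneg.2 h)]
  have h2 : (η + X) * log (1 - η / 2) ≤ (η + 1) * (η / 2 - 2) := by
    nlinarith [mul_le_mul_of_nonneg_left hη' (by linarith : 0 ≤ η + X)]
  nlinarith [mul_nonpos_of_nonneg_of_nonpos (by linarith : 0 ≤ η + X) hs']

lemma ppm_log_bound_le_of_pos (hb : 1 ≤ b) (hη : 0 ≤ η) (hX : 0 ≤ X) (hs : s = b * X)
    (h : 0 < 1 - η / 2 - s) :
    η * (1 - η / 2 - s) * log b + (η + X) * (log (1 - s) + log (1 - η / 2)) ≤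
      exp (-s) * (1 - exp (-(η + X))) * log b := by
  set t := η + X
  have hL : 0 ≤ log b := log_nonneg hb
  have ht : 0 ≤ t := by positivity
  have hs0 : 0 ≤ s := hs ▸ mul_nonneg (by linarith) hX
  have hXL : X / 2 * log b ≤ s := by
    nlinarith [log_le_sub_one_of_pos (by linarith : 0 < b), mul_nonneg hX hL]
  have hlog : log (1 - s) + log (1 - η / 2) ≤ -(X / 2 * log b) := by
    linarith [log_le_sub_one_of_pos (by linarith : 0 < 1 - s),
      log_nonpos (by linarith : 0 ≤ 1 - η / 2) (by linarith : 1 - η / 2 ≤ 1)]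
  have hexp : (1 - s) - t / 2 ≤ exp (-s) * (1 - t / 2) := by
    nlinarith [one_sub_le_exp_neg s, exp_le_one_iff.2 (neg_nonpos.2 hs0)]
  calc η * (1 - η / 2 - s) * log b + t * (log (1 - s) + log (1 - η / 2))
      ≤ t * (1 - η / 2 - s) * log b + t * -(X / 2 * log b) :=
        add_le_add (by gcongr; linarith) (mul_le_mul_of_nonneg_left hlog ht)
    _ = ((1 - s) - t / 2) * (t * log b) := by ring
    _ ≤ exp (-s) * (1 - t / 2) * (t * log b) := by gcongr
    _ = exp (-s) * (t - t ^ 2 / 2) * log b := by ring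
    _ ≤ exp (-s) * (1 - exp (-t)) * log b := by
        have := exp_neg_le_one_sub_add_sq_div_two ht
        gcongr exp (-s) * ?_ * log b
        linarith

lemma ppm_log_bound_le (hb : 1 ≤ b) (hηb : η ≤ b) (hη : 0 < η) (hX : 0 ≤ X)
    (hs : s = b * X) (hs1 : s < 1) {P : ℝ} (hP : exp (-s) * (1 - exp (-(η + X))) ≤ P) :
    η * (1 - η / 2 - s) * log b + (η + X) * (log (1 - s) + log (1 - η / 2)) ≤ P * log b := by
  have hL : 0 ≤ log b := log_nonneg hb
  rcases le_or_gt (1 - η / 2 - s) 0 with h | h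
  · have hXs : X ≤ s := hs ▸ le_mul_of_one_le_left hX hb
    have ht : exp (-(η + X)) ≤ 1 := exp_le_one_iff.2 (by linarith)
    have hP0 : 0 ≤ P := le_trans (mul_nonneg (exp_pos _).le (by linarith)) hP
    linarith [ppm_log_bound_nonpos hb hηb hη hX (by linarith) (by linarith) hs1 h,
      mul_nonneg hP0 hL]
  · exact (ppm_log_bound_le_of_pos hb hη.le hX hs h).trans (mul_le_mul_of_nonneg_right hP hL)
end

lemma floor_inv_mul_log_bounds {c E : ℝ} {b : ℕ} (hc : 0 ≤ c) (hE0 : 0 < E) (hE1 : E < 1)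
    (hcond1 : E * log (1 / E) < 1) (hcond2 : E < exp (-c))
    (hb : b = ⌊1 / (E * log (1 / E))⌋₊) :
    1 ≤ (b : ℝ) ∧ c * (b * E) < 1 := by
  have hEl : 0 < E * log (1 / E) := mul_pos hE0 (log_pos (one_lt_one_div hE0 hE1))
  have hbl : b * (E * log (1 / E)) ≤ 1 := by
    rw [← le_div_iff₀ hEl, hb]
    exact Nat.floor_le (one_div_pos.2 hEl).le
  have hcl : c < log (1 / E) := by
    rw [one_div, log_inv, lt_neg]
    exact (log_lt_iff_lt_exp hE0).2 hcond2
  refine ⟨?_, by nlinarith⟩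
  rw [hb]
  exact_mod_cast (Nat.one_le_floor_iff _).2 (one_le_one_div hEl hcond1.le)

/-- Proposition 1: photon-efficiency lower bound achieved by simple PPM. -/
theorem stmt_2 (c E : ℝ) (hc : 0 ≤ c) (hE0 : 0 < E) (hE1 : E < 1)
    (hcond1 : E * Real.log (1 / E) < 1) (hcond2 : E < Real.exp (-c))
    (b : ℕ) (hb : b = ⌊1 / (E * Real.log (1 / E))⌋₊)
    (η p0 p1 : ℝ) (hη : η = (b : ℝ) * E)
    (hp0 : p0 = Real.exp (-(((b : ℝ) - 1) * c * E)) - Real.exp (-η - (b : ℝ) * c * E))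
    (hp1 : p1 = Real.exp (-η - ((b : ℝ) - 1) * c * E) - Real.exp (-η - (b : ℝ) * c * E)) :
    (1 / η) * (p0 * Real.log ((b : ℝ) * p0 / (p0 + ((b : ℝ) - 1) * p1))
        + ((b : ℝ) - 1) * p1 * Real.log ((b : ℝ) * p1 / (p0 + ((b : ℝ) - 1) * p1)))
    ≥ (1 - η / 2) * Real.log (b : ℝ) - c * η * Real.log (b : ℝ)
        - (1 + c * E / η) * Real.log (1 + c)
        + (1 + c * E / η) * (Real.log (1 - c * η) + Real.log (1 - η / 2))
        - 1 - c * E / η := by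
  obtain ⟨hb1, hs1⟩ := floor_inv_mul_log_bounds hc hE0 hE1 hcond1 hcond2 hb
  rw [← hη] at hs1
  have hη0 : 0 < η := hη ▸ mul_pos (by linarith) hE0
  have hηb : η ≤ b := hη ▸ mul_le_of_le_one_right (by linarith) hE1.le
  have hs : c * η = b * (c * E) := by rw [hη]; ring
  replace hp0 : p0 = ppmP0 b c E := by rw [hp0, hη]; rfl
  replace hp1 : p1 = ppmP1 b c E := by rw [hp1, hη]; rfl
  have hp0pos : 0 < p0 := hp0 ▸ ppmP0_pos (by linarith) hc hE0
  have hp0le : p0 ≤ η + c * E := hη ▸ hp0 ▸ ppmP0_le hb1 hc hE0.le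
  have hp0ge : exp (-(c * η)) * (1 - exp (-(η + c * E))) ≤ p0 := by
    rw [hs, hη, hp0]; exact exp_neg_mul_le_ppmP0 (by linarith) hc hE0.le
  have hinfo := ppmInformation_ge hb1 hp0pos (hp1 ▸ ppmP1_nonneg hc hE0.le)
    (hp0 ▸ hp1 ▸ sub_one_mul_ppmP1_le hb1 hc hE0.le)
  have hlogb := ppm_log_bound_le hb1 hηb hη0 (mul_nonneg hc hE0.le) hs hs1 hp0ge
  have hlog1c : 0 ≤ log (1 + c) + 1 := by
    linarith [log_nonneg (by linarith : (1 : ℝ) ≤ 1 + c)]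
  rw [ge_iff_le, one_div_mul_eq_div, le_div_iff₀ hη0]
  calc _ = η * (1 - η / 2 - c * η) * log b - (η + c * E) * (log (1 + c) + 1)
        + (η + c * E) * (log (1 - c * η) + log (1 - η / 2)) := by field_simp; ring
    _ ≤ p0 * (log b - log (1 + c) - 1) := by
        nlinarith [mul_le_mul_of_nonneg_right hp0le hlog1c]
    _ ≤ ppmInformation b p0 p1 := hinfo
end

section
/- Let b ≥ 2 be an integer and let p2, p3 be real numbers with 0 < p3 ≤ p2. Then (b−1)·p2·log(b·p2/(2·p2+(b−2)·p3)) + ((b−1)(b−2)/2)·p3·log(b·p3/(2·p2+(b−2)·p3)) ≥ (b−1)·p2·log(b/2) − (b²/2)·p3 − b·p2. -/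
/-!
Write `D = 2 p₂ + (b - 2) p₃` and split `log (b p₂ / D) = log (b / 2) + log (2 p₂ / D)`.
Both remaining logarithms are bounded below through `log (x / y) ≥ 1 - y / x`; since
`2 p₂ - D = -(b - 2) p₃` and `b p₃ - D = 2 (p₃ - p₂)`, what is left is a polynomial
inequality, which holds because `(b - 1)(b - 2) ≤ b²`.
-/

open Real

lemma one_sub_div_le_log_div {x y : ℝ} (hx : 0 < x) (hy : 0 < y) : 1 - y / x ≤ log (x / y) := by
  simpa only [inv_div] using one_sub_inv_le_log_of_pos (div_pos hx hy)

/-- Lower bound on the additional mutual-information terms of the soft-decision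
PPM super channel. -/
theorem stmt_4 (b : ℕ) (hb : 2 ≤ b) (p2 p3 : ℝ) (hp3 : 0 < p3) (hle : p3 ≤ p2) :
    ((b : ℝ) - 1) * p2 * Real.log ((b : ℝ) * p2 / (2 * p2 + ((b : ℝ) - 2) * p3))
      + (((b : ℝ) - 1) * ((b : ℝ) - 2) / 2) * p3
          * Real.log ((b : ℝ) * p3 / (2 * p2 + ((b : ℝ) - 2) * p3))
    ≥ ((b : ℝ) - 1) * p2 * Real.log ((b : ℝ) / 2) - ((b : ℝ) ^ 2 / 2) * p3
        - (b : ℝ) * p2 := by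
  have hb' : (2 : ℝ) ≤ b := by exact_mod_cast hb
  have hp2 : 0 < p2 := hp3.trans_le hle
  set D := 2 * p2 + ((b : ℝ) - 2) * p3
  have hD : 0 < D := by positivity
  have hsplit : log (b * p2 / D) = log (b / 2) + log (2 * p2 / D) := by
    rw [← log_mul (by positivity) (by positivity)]
    congr 1
    field_simp
  have hpulse : (b - 1) * p2 * (1 - D / (2 * p2)) ≤ (b - 1) * p2 * log (2 * p2 / D) :=
    mul_le_mul_of_nonneg_left (one_sub_div_le_log_div (by positivity) hD)
      (mul_nonneg (by linarith) hp2.le)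
  have hcoef : 0 ≤ ((b : ℝ) - 1) * (b - 2) := mul_nonneg (by linarith) (by linarith)
  have hpair : (b - 1) * (b - 2) / 2 * p3 * (1 - D / (b * p3))
      ≤ (b - 1) * (b - 2) / 2 * p3 * log (b * p3 / D) :=
    mul_le_mul_of_nonneg_left (one_sub_div_le_log_div (by positivity) hD)
      (mul_nonneg (div_nonneg hcoef zero_le_two) hp3.le)
  have hpoly : -((b : ℝ) ^ 2 / 2) * p3 - b * p2
      ≤ (b - 1) * p2 * (1 - D / (2 * p2)) + (b - 1) * (b - 2) / 2 * p3 * (1 - D / (b * p3)) := by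
    have hbb : 0 ≤ (b : ℝ) ^ 2 - (b - 1) * (b - 2) := by nlinarith
    have expand : (b - 1) * p2 * (1 - D / (2 * p2))
        + (b - 1) * (b - 2) / 2 * p3 * (1 - D / (b * p3)) - (-((b : ℝ) ^ 2 / 2) * p3 - b * p2)
        = ((b ^ 2 - (b - 1) * (b - 2)) * (b * p3 + 2 * p2) + 2 * (b - 1) * (b - 2) * p3)
          / (2 * b) := by
      simp only [D]; field_simp; ring
    rw [← sub_nonneg, expand]
    refine div_nonneg (add_nonneg (mul_nonneg hbb (by positivity)) ?_) (by positivity)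
    simpa only [mul_assoc] using mul_nonneg zero_le_two (mul_nonneg hcoef hp3.le)
  rw [hsplit]
  linarith
end

section
/- Let c ≥ 0 and E ∈ (0, e^{−1}) with (1+c)·E < 1, write L := log(1/E), and let R be the distribution on ℕ with R(0) = 1 − (1+c)·E and R(y) = (1+c)·E·(1 − 1/L)·(1/L)^{y−1} for y ≥ 1. Then for every μ > 0, ∑_{y=0}^∞ Pois_μ(y)·log(Pois_μ(y)/R(y)) = e^{−μ}·log(1/(1−(1+c)·E)) + μ·log L + (1 − e^{−μ})·( log(1/((1+c)·E·L)) + log(1/(1 − 1/L)) ) − ∑_{y=0}^∞ Pois_μ(y)·log(1/Pois_μ(y)). -/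
/-!
Since `log (P / R) = log (1 / R) - log (1 / P)`, the divergence is a cross entropy minus the
entropy `H(Pois_μ)`. For `y ≥ 1`, `log (1 / R y)` is affine in `y`, so the cross entropy only
involves `Pois_μ(0) = e^{-μ}`, the total mass `1` and the mean `μ`. The entropy series converges
because `log y! ≤ 4 ^ y` is absorbed by the exponential series.
-/

open Real
open scoped Nat

noncomputable def poisson (μ : ℝ) (n : ℕ) : ℝ := exp (-μ) * μ ^ n / n !

lemma hasSum_poisson (μ : ℝ) : HasSum (poisson μ) 1 := by
  have := (NormedSpace.expSeries_div_hasSum_exp μ).mul_left (exp (-μ))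
  rw [← exp_eq_exp_ℝ, ← exp_add, neg_add_cancel, exp_zero] at this
  exact this.congr_fun fun n => mul_div_assoc _ _ _

lemma poisson_zero (μ : ℝ) : poisson μ 0 = exp (-μ) := by simp [poisson]

lemma poisson_pos {μ : ℝ} (hμ : 0 < μ) (n : ℕ) : 0 < poisson μ n := by
  unfold poisson; positivity

lemma succ_mul_poisson_succ (μ : ℝ) (n : ℕ) :
    ((n + 1 : ℕ) : ℝ) * poisson μ (n + 1) = μ * poisson μ n := by
  simp only [poisson, Nat.factorial_succ, Nat.cast_mul, pow_succ]
  field_simp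

lemma hasSum_mul_poisson (μ : ℝ) : HasSum (fun n : ℕ => n * poisson μ n) μ := by
  have := (hasSum_nat_add_iff (f := fun n : ℕ => n * poisson μ n) 1).1 <|
    (hasSum_poisson μ).mul_left μ |>.congr_fun fun n => by simp only [succ_mul_poisson_succ]
  simpa using this

lemma log_one_div_poisson {μ : ℝ} (hμ : 0 < μ) (n : ℕ) :
    log (1 / poisson μ n) = μ - n * log μ + log n ! := by
  rw [one_div, log_inv, poisson, log_div (by positivity) (by positivity),
    log_mul (exp_pos _).ne' (by positivity), log_exp, log_pow]
  ring

lemma Real.log_factorial_le_four_pow (n : ℕ) : log n ! ≤ 4 ^ n := by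
  have hn : (n : ℝ) < 2 ^ n := by exact_mod_cast Nat.lt_two_pow_self
  calc log n ! ≤ log ((n : ℝ) ^ n) :=
        log_le_log (by positivity) (by exact_mod_cast Nat.factorial_le_pow n)
    _ = n * log n := log_pow n n
    _ ≤ 2 ^ n * 2 ^ n := by
        gcongr
        exact (log_le_self n.cast_nonneg).trans hn.le
    _ = 4 ^ n := by rw [← mul_pow]; norm_num

lemma summable_mul_pow_div_factorial {f : ℕ → ℝ} {a : ℝ} (hf : ∀ n, |f n| ≤ a ^ n) (x : ℝ) :
    Summable fun n => f n * (x ^ n / n !) := by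
  refine (Real.summable_pow_div_factorial (a * |x|)).of_norm_bounded fun n => ?_
  rw [Real.norm_eq_abs, abs_mul, abs_div, abs_pow, Nat.abs_cast, mul_pow, mul_div_assoc]
  gcongr
  exact hf n

lemma summable_poisson_mul_log_one_div {μ : ℝ} (hμ : 0 < μ) :
    Summable fun n => poisson μ n * log (1 / poisson μ n) := by
  have hfac : Summable fun n => poisson μ n * log n ! := by
    have hle (n : ℕ) : |log (n ! : ℝ)| ≤ 4 ^ n := by
      rw [abs_of_nonneg (log_nonneg (Nat.one_le_cast.2 n.factorial_pos))]
      exact log_factorial_le_four_pow n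
    refine ((summable_mul_pow_div_factorial hle μ).mul_left (exp (-μ))).congr fun n => ?_
    simp only [poisson]; ring
  refine ((((hasSum_poisson μ).summable.mul_left μ).sub
    ((hasSum_mul_poisson μ).summable.mul_left (log μ))).add hfac).congr fun n => ?_
  rw [log_one_div_poisson hμ]; ring

lemma hasSum_mul_of_succ_eq_add_mul {P g : ℕ → ℝ} {m b d : ℝ} (hP : HasSum P 1)
    (hm : HasSum (fun n : ℕ => n * P n) m) (hg : ∀ n : ℕ, g (n + 1) = b + (n + 1 : ℕ) * d) :
    HasSum (fun n => P n * g n) (P 0 * g 0 + (1 - P 0) * b + m * d) := by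
  have affine : HasSum (fun n : ℕ => P n * (b + n * d)) (b + m * d) := by
    have := (hP.mul_left b).add (hm.mul_right d)
    rw [mul_one] at this
    exact this.congr_fun fun n => by ring
  have key := affine.update 0 (P 0 * g 0)
  rw [show P 0 * g 0 - P 0 * (b + ((0 : ℕ) : ℝ) * d) + (b + m * d)
    = P 0 * g 0 + (1 - P 0) * b + m * d by push_cast; ring] at key
  refine key.congr_fun fun n => ?_
  cases n with
  | zero => simp
  | succ n => simp [hg]

lemma log_one_div_geometric {s L : ℝ} (hs : s ≠ 0) (hL : L ≠ 0) (hL1 : 1 - 1 / L ≠ 0) (n : ℕ) :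
    log (1 / (s * (1 - 1 / L) * (1 / L) ^ n))
      = log (1 / (s * L)) + log (1 / (1 - 1 / L)) + (n + 1 : ℕ) * log L := by
  have hpow := pow_ne_zero n (one_div_ne_zero hL)
  rw [log_div one_ne_zero (mul_ne_zero (mul_ne_zero hs hL1) hpow),
    log_div one_ne_zero (mul_ne_zero hs hL), log_div one_ne_zero hL1,
    log_mul (mul_ne_zero hs hL1) hpow, log_mul hs hL1, log_mul hs hL, log_pow,
    log_div one_ne_zero hL, log_one]
  push_cast; ring

/-- Exact expansion of the relative entropy `D(Pois_μ ‖ R)` for the geometric-tail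
output distribution `R` used in the duality bound. -/
theorem stmt_9 (c E : ℝ) (hc : 0 ≤ c) (hE0 : 0 < E) (hE1 : E < Real.exp (-1))
    (hcE : (1 + c) * E < 1) (L : ℝ) (hL : L = Real.log (1 / E))
    (R : ℕ → ℝ) (hR0 : R 0 = 1 - (1 + c) * E)
    (hRy : ∀ y : ℕ, 1 ≤ y → R y = (1 + c) * E * (1 - 1 / L) * (1 / L) ^ (y - 1))
    (μ : ℝ) (hμ : 0 < μ) :
    ∑' y : ℕ, (Real.exp (-μ) * μ ^ y / (Nat.factorial y : ℝ))
        * Real.log ((Real.exp (-μ) * μ ^ y / (Nat.factorial y : ℝ)) / R y)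
    = Real.exp (-μ) * Real.log (1 / (1 - (1 + c) * E)) + μ * Real.log L
        + (1 - Real.exp (-μ))
            * (Real.log (1 / ((1 + c) * E * L)) + Real.log (1 / (1 - 1 / L)))
        - ∑' y : ℕ, (Real.exp (-μ) * μ ^ y / (Nat.factorial y : ℝ))
            * Real.log (1 / (Real.exp (-μ) * μ ^ y / (Nat.factorial y : ℝ))) := by
  show ∑' y, poisson μ y * log (poisson μ y / R y) = _ - ∑' y, poisson μ y * log (1 / poisson μ y)
  have hs : (1 + c) * E ≠ 0 := (mul_pos (by linarith) hE0).ne'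
  have hL1 : 1 < L := by
    rw [hL, one_div, log_inv, lt_neg, ← log_exp (-1)]
    exact log_lt_log hE0 hE1
  have hL1' : 1 - 1 / L ≠ 0 := (sub_pos.2 ((div_lt_one (by linarith)).2 hL1)).ne'
  have hR : ∀ y, R y ≠ 0 := by
    rintro (_ | y)
    · rw [hR0]; linarith
    · rw [hRy _ y.succ_pos]; exact mul_ne_zero (mul_ne_zero hs hL1') (by positivity)
  have hcross := hasSum_mul_of_succ_eq_add_mul (g := fun y => log (1 / R y))
    (b := log (1 / ((1 + c) * E * L)) + log (1 / (1 - 1 / L))) (d := log L)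
    (hasSum_poisson μ) (hasSum_mul_poisson μ) fun n => by
      rw [hRy (n + 1) n.succ_pos, Nat.add_sub_cancel, log_one_div_geometric hs (by positivity) hL1']
  have hsplit : ∀ y, poisson μ y * log (poisson μ y / R y)
      = poisson μ y * log (1 / R y) - poisson μ y * log (1 / poisson μ y) := fun y => by
    rw [log_div (poisson_pos hμ y).ne' (hR y), one_div, one_div, log_inv, log_inv]; ring
  rw [tsum_congr hsplit, (hcross.sub (summable_poisson_mul_log_one_div hμ).hasSum).tsum_eq,
    poisson_zero, hR0]
  ring
end

section
/- Let c ≥ 0 and E ∈ (0,1) satisfy E < e^{−1}, E·log(1/E) < e^{−1/(1−2e^{−1})}/(1+c), and E·(log(1/E))⁴ < 144/(1+c)². Write L := log(1/E). Then for every x with 12/L < x < 1, ((1+x)·e^{−x} − 1)/x² · log( (x+cE)/((1+c)·E·L) ) + (1 − e^{−x})/(x·(x+cE)) < 0. -/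
/-!
With `A = 1 - (1 + x)e^{-x}`, `B = 1 - e^{-x}` and `ℓ` the logarithm, the claim reads
`B / (x (x + cE)) < A ℓ / x²`, and since `x + cE ≥ x` it suffices that `B < A ℓ`.
The bound on `E L⁴` together with `x L > 12` gives `ℓ > L / 2`, and the elementary
inequality `x B ≤ 6 A` then yields `A ℓ > x L B / 12 > B`.
-/

open Real

lemma one_add_mul_exp_neg_lt_one {x : ℝ} (hx : x ≠ 0) : (1 + x) * exp (-x) < 1 := by
  rw [exp_neg, ← div_eq_mul_inv, div_lt_one (exp_pos x)]
  linarith [add_one_lt_exp hx]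

/-- Multiplied by `e^x` this is `6 + 5x ≤ (6 - x) e^x`, which `e^x ≥ 1 + x + x²/2` gives for
`x ≤ 4`. -/
lemma mul_one_sub_exp_neg_le {x : ℝ} (hx0 : 0 ≤ x) (hx4 : x ≤ 4) :
    x * (1 - exp (-x)) ≤ 6 * (1 - (1 + x) * exp (-x)) := by
  have hq := quadratic_le_exp_of_nonneg hx0
  have h6 : 6 + 5 * x ≤ (6 - x) * exp x := by
    nlinarith [mul_le_mul_of_nonneg_left hq (by linarith : (0:ℝ) ≤ 6 - x)]
  rw [exp_neg, ← sub_nonneg]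
  have he := exp_pos x
  have : 6 * (1 - (1 + x) * (exp x)⁻¹) - x * (1 - (exp x)⁻¹)
      = ((6 - x) * exp x - (6 + 5 * x)) / exp x := by field_simp; ring
  rw [this]
  exact div_nonneg (by linarith) he.le

lemma half_log_inv_lt_log_div {k E D L y : ℝ} (hk : 0 < k) (hE : 0 < E) (hD : 0 < D)
    (hyL : k < y * L) (hDL : D ^ 2 * L ^ 2 < k ^ 2 * E) :
    log (1 / E) / 2 < log (y / D) := by
  have hsq : 1 / E < (y / D) ^ 2 := by
    rw [div_pow, div_lt_div_iff₀ hE (by positivity)]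
    nlinarith [mul_lt_mul_of_pos_right (pow_lt_pow_left₀ hyL hk.le two_ne_zero) hE]
  have := log_lt_log (by positivity) hsq
  rw [log_pow] at this
  push_cast at this
  linarith

lemma one_sub_exp_neg_lt_mul {x L ℓ : ℝ} (hx0 : 0 < x) (hx4 : x ≤ 4) (hxL : 12 < x * L)
    (hℓ : L / 2 < ℓ) : 1 - exp (-x) < (1 - (1 + x) * exp (-x)) * ℓ := by
  have hA : 0 < 1 - (1 + x) * exp (-x) := sub_pos.mpr (one_add_mul_exp_neg_lt_one hx0.ne')
  have hB : 0 < 1 - exp (-x) := sub_pos.mpr (exp_lt_one_iff.mpr (neg_neg_of_pos hx0))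
  have hkey := mul_one_sub_exp_neg_le hx0.le hx4
  have hL : 0 < L := pos_of_mul_pos_right (by linarith) hx0.le
  nlinarith [mul_lt_mul_of_pos_left hxL hB, mul_le_mul_of_nonneg_right hkey hL.le,
    mul_lt_mul_of_pos_left hℓ hA]

theorem stmt_11_general (c E : ℝ) (hc : 0 ≤ c) (hE0 : 0 < E) (hE1 : E < 1)
    (hcond3 : E * (Real.log (1 / E)) ^ 4 < 144 / (1 + c) ^ 2)
    (L : ℝ) (hL : L = Real.log (1 / E))
    (x : ℝ) (hx1 : 12 / L < x) (hx2 : x < 1) :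
    ((1 + x) * Real.exp (-x) - 1) / x ^ 2
        * Real.log ((x + c * E) / ((1 + c) * E * L))
      + (1 - Real.exp (-x)) / (x * (x + c * E)) < 0 := by
  have hLpos : 0 < L := by
    rw [hL, one_div, log_inv]
    linarith [log_neg hE0 hE1]
  have hx0 : 0 < x := lt_trans (by positivity) hx1
  have hxL : 12 < x * L := by rwa [div_lt_iff₀ hLpos] at hx1
  have hcE : 0 ≤ c * E := mul_nonneg hc hE0.le
  have hDL : ((1 + c) * E * L) ^ 2 * L ^ 2 < 12 ^ 2 * E := by
    rw [← hL, lt_div_iff₀ (by positivity)] at hcond3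
    nlinarith
  have hℓ : L / 2 < log ((x + c * E) / ((1 + c) * E * L)) := by
    have := half_log_inv_lt_log_div (by norm_num) hE0 (by positivity)
      (by nlinarith : 12 < (x + c * E) * L) hDL
    rwa [← hL] at this
  have hmain := one_sub_exp_neg_lt_mul hx0 (by linarith) hxL hℓ
  have hB : 0 ≤ 1 - exp (-x) := sub_nonneg.mpr (exp_le_one_iff.mpr (by linarith))
  calc ((1 + x) * exp (-x) - 1) / x ^ 2 * log ((x + c * E) / ((1 + c) * E * L))
        + (1 - exp (-x)) / (x * (x + c * E))
      ≤ ((1 + x) * exp (-x) - 1) / x ^ 2 * log ((x + c * E) / ((1 + c) * E * L))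
        + (1 - exp (-x)) / x ^ 2 := by
        gcongr
        nlinarith
    _ < 0 := by
        rw [div_mul_eq_mul_div, ← add_div, div_neg_iff]
        right
        exact ⟨by linarith, by positivity⟩

/-- Case 1 of the localization of the maximizer of φ: the derivative of φ is
negative on `(12/log(1/E), 1)`. -/
theorem stmt_11 (c E : ℝ) (hc : 0 ≤ c) (hE0 : 0 < E) (hE1 : E < 1)
    (hcond1 : E < Real.exp (-1))
    (hcond2 : E * Real.log (1 / E) < Real.exp (-(1 / (1 - 2 * Real.exp (-1)))) / (1 + c))
    (hcond3 : E * (Real.log (1 / E)) ^ 4 < 144 / (1 + c) ^ 2)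
    (L : ℝ) (hL : L = Real.log (1 / E))
    (x : ℝ) (hx1 : 12 / L < x) (hx2 : x < 1) :
    ((1 + x) * Real.exp (-x) - 1) / x ^ 2
        * Real.log ((x + c * E) / ((1 + c) * E * L))
      + (1 - Real.exp (-x)) / (x * (x + c * E)) < 0 :=
  stmt_11_general c E hc hE0 hE1 hcond3 L hL x hx1 hx2
end

section
/- Let c ≥ 0 and E ∈ (0,1) satisfy E < e^{−1} and E·log(1/E) < e^{−1/(1−2e^{−1})}/(1+c). Write L := log(1/E). Then for every x ≥ 1, ((1+x)·e^{−x} − 1)/x² · log( (x+cE)/((1+c)·E·L) ) + (1 − e^{−x})/(x·(x+cE)) < 0. -/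
/-!
Put `M := 1 / (1 - 2 e⁻¹)`. For `x ≥ 1` the factor `(1 + x) e^{-x} - 1` is at most `-(1 - 2 e⁻¹) = -1 / M`,
while the second hypothesis on `E` says `(1 + c) E L < e^{-M}`, so the logarithm exceeds `M` as soon as
`x + cE ≥ 1`. Hence the first summand is at most `-1 / x²`, and the second one is strictly below `1 / x²`.
-/

open Real

lemma one_add_mul_exp_neg_le {x : ℝ} (hx : 1 ≤ x) : (1 + x) * exp (-x) ≤ 2 * exp (-1) := by
  have h : 1 + x ≤ 2 * exp (x - 1) := by
    linarith [add_one_le_exp (x - 1), one_le_exp (show 0 ≤ x - 1 by linarith)]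
  calc (1 + x) * exp (-x) ≤ 2 * exp (x - 1) * exp (-x) := by gcongr
    _ = 2 * exp (-1) := by rw [mul_assoc, ← exp_add]; ring_nf

lemma lt_log_div_of_mul_exp_lt {M P y : ℝ} (hP : 0 < P) (h : P * exp M < y) :
    M < log (y / P) := by
  have hy : 0 < y := (mul_pos hP (exp_pos M)).trans h
  rw [lt_log_iff_exp_lt (div_pos hy hP), lt_div_iff₀ hP]
  linarith

lemma mul_exp_neg_sub_one_div_sq_mul_le {x ℓ : ℝ} (hx : 1 ≤ x)
    (hℓ : 1 / (1 - 2 * exp (-1)) < ℓ) :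
    ((1 + x) * exp (-x) - 1) / x ^ 2 * ℓ ≤ -(1 / x ^ 2) := by
  have hδ : 0 < 1 - 2 * exp (-1) := by linarith [exp_neg_one_lt_half]
  have hu : (1 + x) * exp (-x) - 1 ≤ -(1 - 2 * exp (-1)) := by
    linarith [one_add_mul_exp_neg_le hx]
  have hnum : ((1 + x) * exp (-x) - 1) * ℓ ≤ -1 :=
    calc ((1 + x) * exp (-x) - 1) * ℓ
        ≤ ((1 + x) * exp (-x) - 1) * (1 / (1 - 2 * exp (-1))) :=
          mul_le_mul_of_nonpos_left hℓ.le (by linarith)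
      _ ≤ -(1 - 2 * exp (-1)) * (1 / (1 - 2 * exp (-1))) := by gcongr
      _ = -1 := by field_simp
  rw [div_mul_eq_mul_div, neg_div']
  gcongr

lemma one_sub_exp_neg_div_lt {x d : ℝ} (hx : 0 < x) (hd : 0 ≤ d) :
    (1 - exp (-x)) / (x * (x + d)) < 1 / x ^ 2 :=
  calc (1 - exp (-x)) / (x * (x + d)) ≤ (1 - exp (-x)) / x ^ 2 := by
        gcongr
        · linarith [exp_le_one_iff.mpr (neg_nonpos.mpr hx.le)]
        · nlinarith
    _ < 1 / x ^ 2 := by gcongr; linarith [exp_pos (-x)]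

theorem stmt_12_general (c E : ℝ) (hc : 0 ≤ c) (hE0 : 0 < E) (hE1 : E < 1)
    (hcond2 : E * Real.log (1 / E) < Real.exp (-(1 / (1 - 2 * Real.exp (-1)))) / (1 + c))
    (L : ℝ) (hL : L = Real.log (1 / E))
    (x : ℝ) (hx : 1 ≤ x) :
    ((1 + x) * Real.exp (-x) - 1) / x ^ 2
        * Real.log ((x + c * E) / ((1 + c) * E * L))
      + (1 - Real.exp (-x)) / (x * (x + c * E)) < 0 := by
  set M := 1 / (1 - 2 * exp (-1))
  have hL0 : 0 < L := hL ▸ log_pos (by rw [one_div]; exact (one_lt_inv₀ hE0).mpr hE1)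
  have hcE : 0 ≤ c * E := mul_nonneg hc hE0.le
  have hP : (1 + c) * E * L * exp M < x + c * E :=
    calc (1 + c) * E * L * exp M < exp (-M) * exp M := by
          gcongr
          rw [mul_assoc, hL, ← lt_div_iff₀' (by linarith)]
          exact hcond2
      _ = 1 := by rw [← exp_add, neg_add_cancel, exp_zero]
      _ ≤ x + c * E := by linarith
  have hlog := lt_log_div_of_mul_exp_lt (by positivity) hP
  linarith [mul_exp_neg_sub_one_div_sq_mul_le hx hlog,
    one_sub_exp_neg_div_lt (x := x) (by linarith) hcE]

/-- Case 2 of the localization of the maximizer of φ: the derivative of φ is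
negative on `[1, ∞)`. -/
theorem stmt_12 (c E : ℝ) (hc : 0 ≤ c) (hE0 : 0 < E) (hE1 : E < 1)
    (hcond1 : E < Real.exp (-1))
    (hcond2 : E * Real.log (1 / E) < Real.exp (-(1 / (1 - 2 * Real.exp (-1)))) / (1 + c))
    (L : ℝ) (hL : L = Real.log (1 / E))
    (x : ℝ) (hx : 1 ≤ x) :
    ((1 + x) * Real.exp (-x) - 1) / x ^ 2
        * Real.log ((x + c * E) / ((1 + c) * E * L))
      + (1 - Real.exp (-x)) / (x * (x + c * E)) < 0 :=
  stmt_12_general c E hc hE0 hE1 hcond2 L hL x hx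
end

section
/- Let c ≥ 0 and E ∈ (0,1) satisfy E < e^{−1}, E·log(1/E) < e^{−1/(1−2e^{−1})}/(1+c), and E·(log(1/E))⁴ < 144/(1+c)². Then for every x > 0, ((1 − e^{−x})/x)·log( (x + cE)/((1+c)·E·log(1/E)) ) ≤ log(1/E) − 2·log log(1/E) − log(1+c) + log 13. -/
/-! Write `L = log (1/E)`, `A = (1+c) E L` and `T = log (13 / (A L))`; the right-hand side is `T`.
The kernel satisfies `(1 - e^{-x})/x ≤ 2/(x+2)` (the Padé bound `e^x ≤ (2+x)/(2-x)`), and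
`(x + cE)/A ≤ (x + A)/A`. The tangent-line bound `log y ≤ y - 1` at `y = (x+A)T/2` then gives
`log ((x+A)/A) ≤ (x+2)T/2` as soon as `AT ≤ 2` and `2 ≤ A T e^T`. The third hypothesis says
`A L < 12 e^{-L/2}`, so `T > L/2` and `A T e^T = 13 T / L > 13/2`; the second gives `A ≤ 1/11`,
so `A T ≤ A log (13/A) ≤ 2`. -/

open Real

lemma two_sub_mul_exp_le {x : ℝ} (hx : 0 ≤ x) : (2 - x) * exp x ≤ 2 + x := by
  rcases lt_or_ge x 2 with hx2 | hx2
  · have := exp_le_two_add_div_two_sub hx hx2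
    rwa [le_div_iff₀ (by linarith), mul_comm] at this
  · nlinarith [exp_pos x]

lemma one_sub_exp_neg_div_le {x : ℝ} (hx : 0 < x) : (1 - exp (-x)) / x ≤ 2 / (x + 2) := by
  rw [div_le_div_iff₀ hx (by linarith), exp_neg]
  field_simp
  nlinarith [two_sub_mul_exp_le hx.le, exp_pos x]

lemma two_div_add_two_mul_log_le {A T x : ℝ} (hA : 0 < A) (hT : 0 < T) (hx : 0 ≤ x)
    (hAT : A * T ≤ 2) (hexp : 2 ≤ A * T * exp T) :
    2 / (x + 2) * log ((x + A) / A) ≤ T := by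
  have hsplit : log ((x + A) / A) = log ((x + A) * T / 2) + log (2 / (A * T)) := by
    rw [← log_mul (by positivity) (by positivity)]
    congr 1
    field_simp
  have htangent := log_le_sub_one_of_pos (by positivity : 0 < (x + A) * T / 2)
  have hlog : log (2 / (A * T)) ≤ T := by
    rw [log_le_iff_le_exp (by positivity), div_le_iff₀ (by positivity)]
    linarith
  rw [div_mul_eq_mul_div, div_le_iff₀ (by linarith)]
  linarith

lemma one_sub_exp_neg_div_mul_log_le {a A T x : ℝ} (ha : 0 ≤ a) (haA : a ≤ A) (hA : 0 < A)
    (hT : 0 < T) (hx : 0 < x) (hAT : A * T ≤ 2) (hexp : 2 ≤ A * T * exp T) :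
    (1 - exp (-x)) / x * log ((x + a) / A) ≤ T := by
  rcases le_or_gt (log ((x + a) / A)) 0 with hlog | hlog
  · have hkernel : 0 ≤ (1 - exp (-x)) / x :=
      div_nonneg (sub_nonneg.2 (exp_le_one_iff.2 (by linarith))) hx.le
    nlinarith
  calc (1 - exp (-x)) / x * log ((x + a) / A)
      ≤ 2 / (x + 2) * log ((x + a) / A) :=
        mul_le_mul_of_nonneg_right (one_sub_exp_neg_div_le hx) hlog.le
    _ ≤ 2 / (x + 2) * log ((x + A) / A) := by gcongr
    _ ≤ T := two_div_add_two_mul_log_le hA hT hx.le hAT hexp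

lemma half_lt_log_div_of_sq_lt {A L : ℝ} (hAL : 0 < A * L) (h : (A * L) ^ 2 < 144 * exp (-L)) :
    L / 2 < log (13 / (A * L)) := by
  rw [lt_log_iff_exp_lt (by positivity), lt_div_iff₀ hAL]
  have hsq : (A * L * exp (L / 2)) ^ 2 < 12 ^ 2 := by
    calc (A * L * exp (L / 2)) ^ 2 = (A * L) ^ 2 * exp L := by
          rw [mul_pow, ← exp_nat_mul, Nat.cast_ofNat, mul_div_cancel₀ _ two_ne_zero]
      _ < 144 * exp (-L) * exp L := by gcongr
      _ = 12 ^ 2 := by rw [mul_assoc, ← exp_add]; norm_num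
  nlinarith [lt_of_pow_lt_pow_left₀ 2 (by norm_num) hsq]

lemma mul_log_div_le_two {A L : ℝ} (hA : 0 < A) (hA11 : A ≤ 1 / 11) (hL : 1 ≤ L) :
    A * log (13 / (A * L)) ≤ 2 := by
  have h13 := log_le_sub_one_of_pos (by norm_num : (0 : ℝ) < 13)
  have hinv := log_le_sub_one_of_pos (inv_pos.2 hA)
  have hmono : log (13 / (A * L)) ≤ log 13 + log A⁻¹ := by
    rw [← log_mul (by norm_num) (by positivity), ← div_eq_mul_inv]
    exact log_le_log (by positivity)
      (div_le_div_of_nonneg_left (by norm_num) hA (le_mul_of_one_le_right hA.le hL))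
  calc A * log (13 / (A * L)) ≤ A * (12 + (A⁻¹ - 1)) := by gcongr; linarith
    _ = 11 * A + 1 := by field_simp; ring
    _ ≤ 2 := by linarith

lemma exp_neg_one_div_one_sub_two_mul_exp_neg_one_le :
    exp (-(1 / (1 - 2 * exp (-1)))) ≤ 1 / 11 := by
  have he1 := exp_one_gt_d9
  have he2 := exp_one_lt_d9
  have hinv : exp (-1) * exp 1 = 1 := by rw [← exp_add]; norm_num
  have hpos : 0 < 1 - 2 * exp (-1) := by nlinarith [exp_pos (-1)]
  have h3 : 3 ≤ 1 / (1 - 2 * exp (-1)) := by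
    rw [le_div_iff₀ hpos]; nlinarith [exp_pos (-1)]
  calc exp (-(1 / (1 - 2 * exp (-1)))) ≤ exp (-3) := exp_le_exp.2 (by linarith)
    _ ≤ 1 / 11 := by
      have h11 : 11 ≤ exp 3 := by
        calc (11 : ℝ) ≤ 2.7182818283 ^ 3 := by norm_num
          _ ≤ exp 1 ^ 3 := pow_le_pow_left₀ (by norm_num) he1.le 3
          _ = exp 3 := by rw [← exp_nat_mul]; norm_num
      rw [exp_neg, one_div]
      exact inv_anti₀ (by norm_num) h11

lemma one_sub_exp_neg_div_mul_log_le_log_div {a A L x : ℝ} (ha : 0 ≤ a) (haA : a ≤ A)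
    (hA : 0 < A) (hA11 : A ≤ 1 / 11) (hL : 1 ≤ L) (hsq : (A * L) ^ 2 < 144 * exp (-L))
    (hx : 0 < x) :
    (1 - exp (-x)) / x * log ((x + a) / A) ≤ log (13 / (A * L)) := by
  have hhalf := half_lt_log_div_of_sq_lt (by positivity) hsq
  refine one_sub_exp_neg_div_mul_log_le ha haA hA (by linarith) hx
    (mul_log_div_le_two hA hA11 hL) ?_
  have hcancel : A * log (13 / (A * L)) * (13 / (A * L)) = 13 * log (13 / (A * L)) / L := by
    field_simp
  rw [exp_log (by positivity), hcancel, le_div_iff₀ (by positivity)]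
  linarith

theorem stmt_13_general (c E : ℝ) (hc : 0 ≤ c) (hE0 : 0 < E)
    (hcond1 : E < Real.exp (-1))
    (hcond2 : E * Real.log (1 / E) < Real.exp (-(1 / (1 - 2 * Real.exp (-1)))) / (1 + c))
    (hcond3 : E * (Real.log (1 / E)) ^ 4 < 144 / (1 + c) ^ 2)
    (x : ℝ) (hx : 0 < x) :
    ((1 - Real.exp (-x)) / x)
        * Real.log ((x + c * E) / ((1 + c) * E * Real.log (1 / E)))
    ≤ Real.log (1 / E) - 2 * Real.log (Real.log (1 / E)) - Real.log (1 + c)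
        + Real.log 13 := by
  set L := log (1 / E) with hL_def
  have hc1 : 0 < 1 + c := by linarith
  have hlogE : log E = -L := by rw [hL_def, one_div, log_inv, neg_neg]
  have hL : 1 < L := by
    rw [hL_def, lt_log_iff_exp_lt (by positivity), lt_one_div (exp_pos 1) hE0, one_div, ← exp_neg]
    exact hcond1
  have hrhs : L - 2 * log L - log (1 + c) + log 13 = log (13 / ((1 + c) * E * L * L)) := by
    rw [log_div (by norm_num) (by positivity), log_mul (by positivity) (by positivity),
      log_mul (by positivity) (by positivity), log_mul hc1.ne' hE0.ne', hlogE]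
    ring
  rw [hrhs]
  refine one_sub_exp_neg_div_mul_log_le_log_div (by positivity) ?_ (by positivity) ?_ hL.le ?_ hx
  · nlinarith [mul_nonneg hc hE0.le]
  · have := (lt_div_iff₀ hc1).1 hcond2
    linarith [exp_neg_one_div_one_sub_two_mul_exp_neg_one_le]
  · rw [← hlogE, exp_log hE0]
    calc ((1 + c) * E * L * L) ^ 2 = E * (E * L ^ 4 * (1 + c) ^ 2) := by ring
      _ < E * 144 := by gcongr; exact (lt_div_iff₀ (by positivity)).1 hcond3
      _ = 144 * E := by ring

/-- Supremum bound (151) on the function φ used in the duality upper bound. -/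
theorem stmt_13 (c E : ℝ) (hc : 0 ≤ c) (hE0 : 0 < E) (hE1 : E < 1)
    (hcond1 : E < Real.exp (-1))
    (hcond2 : E * Real.log (1 / E) < Real.exp (-(1 / (1 - 2 * Real.exp (-1)))) / (1 + c))
    (hcond3 : E * (Real.log (1 / E)) ^ 4 < 144 / (1 + c) ^ 2)
    (x : ℝ) (hx : 0 < x) :
    ((1 - Real.exp (-x)) / x)
        * Real.log ((x + c * E) / ((1 + c) * E * Real.log (1 / E)))
    ≤ Real.log (1 / E) - 2 * Real.log (Real.log (1 / E)) - Real.log (1 + c)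
        + Real.log 13 :=
  stmt_13_general c E hc hE0 hcond1 hcond2 hcond3 x hx
end

section
/- The following two inequalities hold: (i) for every x with 0 < x ≤ 1, ((1+x)·e^{−x} − 1)/x² ≤ −1/2 + x/3, and in particular ((1+x)·e^{−x} − 1)/x² ≤ −1/6; (ii) for every x ≥ 1, (1+x)·e^{−x} ≤ 2·e^{−1}. -/
/-!
The cubic Taylor bound `1 + x + x²/2 + x³/6 ≤ eˣ` gives
`(1 + x) ≤ (1 - x²/2 + x³/3) eˣ`, since the product of the two cubics is
`1 + x + x⁴/12 + x⁵/12 + x⁶/18`. For `x ≥ 1` it suffices that `(1 + x) e^{-x}`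
is antitone on `[0, ∞)`, which follows from `1 + t ≤ eᵗ`.
-/

open Real Set

theorem one_add_mul_exp_neg_le_cubic {x : ℝ} (hx : 0 ≤ x) :
    (1 + x) * exp (-x) ≤ 1 - x ^ 2 / 2 + x ^ 3 / 3 := by
  have htaylor : 1 + x + x ^ 2 / 2 + x ^ 3 / 6 ≤ exp x := by
    have h := sum_le_exp_of_nonneg hx 4
    simp only [Finset.sum_range_succ, Finset.sum_range_zero, Nat.factorial] at h
    norm_num at h
    linarith
  have hcubic : 0 ≤ 1 - x ^ 2 / 2 + x ^ 3 / 3 := by nlinarith [sq_nonneg (x - 1)]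
  rw [exp_neg, mul_inv_le_iff₀ (exp_pos x)]
  calc 1 + x ≤ (1 - x ^ 2 / 2 + x ^ 3 / 3) * (1 + x + x ^ 2 / 2 + x ^ 3 / 6) := by
        nlinarith [pow_nonneg hx 4, pow_nonneg hx 5, pow_nonneg hx 6]
    _ ≤ (1 - x ^ 2 / 2 + x ^ 3 / 3) * exp x := mul_le_mul_of_nonneg_left htaylor hcubic

theorem one_add_mul_exp_neg_sub_one_div_sq_le {x : ℝ} (hx : 0 < x) :
    ((1 + x) * exp (-x) - 1) / x ^ 2 ≤ -(1 / 2) + x / 3 := by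
  rw [div_le_iff₀ (by positivity)]
  nlinarith [one_add_mul_exp_neg_le_cubic hx.le]

theorem antitoneOn_one_add_mul_exp_neg :
    AntitoneOn (fun x : ℝ => (1 + x) * exp (-x)) (Ici 0) := by
  rintro a (ha : 0 ≤ a) b - hab
  have hexp : (1 + (b - a)) * exp (-b) ≤ exp (-a) := by
    calc (1 + (b - a)) * exp (-b) ≤ exp (b - a) * exp (-b) :=
          mul_le_mul_of_nonneg_right (by linarith [add_one_le_exp (b - a)]) (exp_pos _).le
      _ = exp (-a) := by rw [← exp_add]; ring_nf
  calc (1 + b) * exp (-b) ≤ (1 + a) * ((1 + (b - a)) * exp (-b)) := by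
        nlinarith [mul_nonneg (mul_nonneg ha (sub_nonneg.2 hab)) (exp_pos (-b)).le]
    _ ≤ (1 + a) * exp (-a) := mul_le_mul_of_nonneg_left hexp (by linarith)

/-- Estimates (138)–(140) and (142) on the factor `((1+x)e^{-x} - 1)/x²`. -/
theorem stmt_16 :
    (∀ x : ℝ, 0 < x → x ≤ 1 →
        ((1 + x) * Real.exp (-x) - 1) / x ^ 2 ≤ -(1 / 2) + x / 3
          ∧ ((1 + x) * Real.exp (-x) - 1) / x ^ 2 ≤ -(1 / 6))
    ∧ (∀ x : ℝ, 1 ≤ x → (1 + x) * Real.exp (-x) ≤ 2 * Real.exp (-1)) := by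
  refine ⟨fun x hx hx1 => ?_, fun x hx => ?_⟩
  · have h := one_add_mul_exp_neg_sub_one_div_sq_le hx
    exact ⟨h, h.trans (by linarith)⟩
  · have h := antitoneOn_one_add_mul_exp_neg (by norm_num : (1 : ℝ) ∈ Ici 0)
      (by simp only [mem_Ici]; linarith) hx
    norm_num at h
    linarith
end

section
/- Let E > 0 and let p : ℕ → ℝ be a probability mass function (p(y) ≥ 0 for all y and ∑_{y=0}^∞ p(y) = 1) whose mean satisfies ∑_{y=0}^∞ y·p(y) ≤ E, and such that y ↦ p(y)·log(1/p(y)) is summable. Then the entropy satisfies ∑_{y=0}^∞ p(y)·log(1/p(y)) ≤ (1+E)·log(1+E) − E·log E. -/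
/-!
Gibbs' inequality `p log (1/p) ≤ p log (1/q) + q - p` (from `log x ≤ x - 1`), summed over `ℕ`,
bounds the entropy of `p` by its cross entropy against the geometric law `q n = (1 - r) rⁿ`.
Since `log (1/q n) = -log (1 - r) - n log r` is affine in `n`, the cross entropy only depends on
the mean of `p`; with `r = E / (1 + E)` it is at most `(1 + E) log (1 + E) - E log E`.
-/

open Real

theorem mul_log_one_div_le_mul_log_one_div_add_sub {p q : ℝ} (hp : 0 ≤ p) (hq : 0 < q) :
    p * log (1 / p) ≤ p * log (1 / q) + (q - p) := by
  rcases hp.eq_or_lt with rfl | hp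
  · simpa using hq.le
  have hsplit : log (1 / p) = log (1 / q) + log (q / p) := by
    rw [← log_mul (by positivity) (by positivity)]
    congr 1
    field_simp
  calc p * log (1 / p) = p * log (1 / q) + p * log (q / p) := by rw [hsplit, mul_add]
    _ ≤ p * log (1 / q) + p * (q / p - 1) := by
        gcongr
        exact log_le_sub_one_of_pos (by positivity)
    _ = p * log (1 / q) + (q - p) := by field_simp

theorem tsum_mul_log_one_div_le {ι : Type*} {p q : ι → ℝ} (hp : ∀ i, 0 ≤ p i)
    (hq : ∀ i, 0 < q i) (hps : Summable p) (hqs : Summable q)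
    (hent : Summable fun i => p i * log (1 / p i))
    (hcross : Summable fun i => p i * log (1 / q i)) :
    ∑' i, p i * log (1 / p i) ≤ ∑' i, p i * log (1 / q i) + (∑' i, q i - ∑' i, p i) := by
  rw [← hqs.tsum_sub hps, ← hcross.tsum_add (hqs.sub hps)]
  exact hent.tsum_le_tsum (fun i => mul_log_one_div_le_mul_log_one_div_add_sub (hp i) (hq i))
    (hcross.add (hqs.sub hps))

section Geometric

variable {r : ℝ}

theorem hasSum_one_sub_mul_pow (hr0 : 0 < r) (hr1 : r < 1) :
    HasSum (fun n : ℕ => (1 - r) * r ^ n) 1 := by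
  have := (hasSum_geometric_of_lt_one hr0.le hr1).mul_left (1 - r)
  rwa [mul_inv_cancel₀ (sub_pos.2 hr1).ne'] at this

theorem log_one_div_one_sub_mul_pow (hr0 : 0 < r) (hr1 : r < 1) (n : ℕ) :
    log (1 / ((1 - r) * r ^ n)) = -log (1 - r) - n * log r := by
  rw [one_div, log_inv, log_mul (sub_pos.2 hr1).ne' (pow_ne_zero _ hr0.ne'), log_pow]
  ring

theorem hasSum_mul_log_one_div_one_sub_mul_pow (hr0 : 0 < r) (hr1 : r < 1) {p : ℕ → ℝ}
    {a m : ℝ} (hps : HasSum p a)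
    (hmean : HasSum (fun n : ℕ => (n : ℝ) * p n) m) :
    HasSum (fun n => p n * log (1 / ((1 - r) * r ^ n))) (-log (1 - r) * a - log r * m) := by
  simp_rw [log_one_div_one_sub_mul_pow hr0 hr1]
  exact ((hps.mul_left (-log (1 - r))).sub (hmean.mul_left (log r))).congr_fun
    fun n => by ring

end Geometric

/-- Maximum-entropy bound for nonnegative-integer random variables under a
first-moment constraint: the entropy is at most that of the geometric
distribution with mean `E`. -/
theorem stmt_17 (E : ℝ) (hE : 0 < E) (p : ℕ → ℝ)
    (hp : ∀ y : ℕ, 0 ≤ p y) (hp1 : ∑' y : ℕ, p y = 1)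
    (hmean_summable : Summable (fun y : ℕ => (y : ℝ) * p y))
    (hmean : ∑' y : ℕ, (y : ℝ) * p y ≤ E)
    (hent_summable : Summable (fun y : ℕ => p y * Real.log (1 / p y))) :
    ∑' y : ℕ, p y * Real.log (1 / p y)
      ≤ (1 + E) * Real.log (1 + E) - E * Real.log E := by
  have h1E : 0 < 1 + E := by linarith
  set r := E / (1 + E)
  have hr0 : 0 < r := by positivity
  have hr1 : r < 1 := (div_lt_one h1E).2 (by linarith)
  have hps : Summable p := by
    by_contra h
    simp [tsum_eq_zero_of_not_summable h] at hp1
  have hcross := hasSum_mul_log_one_div_one_sub_mul_pow hr0 hr1 (hp1 ▸ hps.hasSum)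
    hmean_summable.hasSum
  have hlog_one_sub : log (1 - r) = -log (1 + E) := by
    rw [show 1 - r = (1 + E)⁻¹ by simp only [r]; field_simp; ring, log_inv]
  have hlog : log r = log E - log (1 + E) := log_div hE.ne' h1E.ne'
  calc ∑' y, p y * log (1 / p y)
      ≤ ∑' y, p y * log (1 / ((1 - r) * r ^ y)) + (∑' y, (1 - r) * r ^ y - ∑' y, p y) :=
        tsum_mul_log_one_div_le hp (fun y => by have := sub_pos.2 hr1; positivity) hps
          (hasSum_one_sub_mul_pow hr0 hr1).summable hent_summable hcross.summable
    _ = -log (1 - r) - log r * ∑' y : ℕ, (y : ℝ) * p y := by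
        rw [hcross.tsum_eq, (hasSum_one_sub_mul_pow hr0 hr1).tsum_eq, hp1]
        ring
    _ ≤ -log (1 - r) - log r * E := by
        have := log_neg hr0 hr1
        nlinarith
    _ = (1 + E) * log (1 + E) - E * log E := by
        rw [hlog_one_sub, hlog]
        ring
end
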